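/- Let A be a reduced commutative ring and P a finitely generated A-module. Assume s ∈ A is a non-zerodivisor such that the localization P_s is a free A_s-module of rank r ≥ 1. Then there exist p_1,…,p_r ∈ P, A-linear maps φ_1,…,φ_r : P → A, and t ∈ ℕ such that: (i) s^t·P ⊆ F and s^t·Hom_A(P,A) ⊆ G, where F = Ap_1 + … + Ap_r and G = Aφ_1 + … + Aφ_r; and (ii) φ_i(p_j) = s^t if i = j and φ_i(p_j) = 0 if i ≠ j. -/

import Mathlib

/-!
Rescaling a basis of `P_s` by units of `A_s` makes its vectors images of elements `p_i ∈ P`.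
The coordinate functionals of this basis, pulled back to `P`, have values in `A_s`; as `P` is
finitely generated and `A → A_s` is injective, one power of `s` turns all of them into maps
`φ_i : P → A`, dual to the `p_i` up to that power. The expansion `ψ = ∑ ψ(p_i) φ_i` can be checked
after the injective map `A → A_s`, where it is the expansion of the extension of `ψ` in the dual
basis. The expansion of `x ∈ P` in the `p_i` holds in `P_s`, hence in `P` after multiplying by a
further power of `s`, uniformly in `x` because `P` is finitely generated.
-/

open Module

section

variable {A R : Type*} [CommRing A] [CommRing R] [Algebra A R] {P : Type*} [AddCommGroup P]
  [Module A P] {M : Type*} [AddCommGroup M] [Module A M] [Module R M] {ι : Type*}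

theorem IsLocalization.exists_algebraMap_apply_eq_smul [Finite ι] (S : Submonoid A)
    [IsLocalization S R] (hS : S ≤ nonZeroDivisors A) [Module.Finite A P] (g : ι → P →ₗ[A] R) :
    ∃ u ∈ S, ∃ φ : ι → P →ₗ[A] A, ∀ i x, algebraMap A R (φ i x) = u • g i x := by
  obtain ⟨u, hu, hint⟩ := FractionalIdeal.isFractional_of_fg (S := S)
    (Submodule.fg_iSup _ fun i => Submodule.fg_range (g i))
  have hrange (i : ι) (x : P) : (u • g i) x ∈ LinearMap.range (Algebra.linearMap A R) := by
    obtain ⟨a, ha⟩ := hint _ (Submodule.mem_iSup_of_mem i ⟨x, rfl⟩)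
    exact ⟨a, ha⟩
  let E := LinearEquiv.ofInjective (Algebra.linearMap A R) (IsLocalization.injective R hS)
  exact ⟨u, hu, fun i => E.symm.toLinearMap ∘ₗ (u • g i).codRestrict _ (hrange i),
    fun i x => congrArg Subtype.val (E.apply_symm_apply _)⟩

namespace IsLocalizedModule

theorem exists_basis_apply_eq [IsScalarTower A R M] (S : Submonoid A) [IsLocalization S R]
    (f : P →ₗ[A] M) [IsLocalizedModule S f] (b : Basis ι R M) :
    ∃ (e : Basis ι R M) (p : ι → P), ∀ i, e i = f (p i) := by
  choose q hq using fun i => surj S f (b i)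
  refine ⟨b.unitsSMul fun i => (IsLocalization.map_units R (q i).2).unit, fun i => (q i).1,
    fun i => ?_⟩
  rw [Basis.unitsSMul_apply, Units.smul_def, IsUnit.unit_spec, ← hq i, algebraMap_smul,
    Submonoid.smul_def]

/- In the next three lemmas, `φ i : P → A` lifts `u` times the `i`-th coordinate of `e`; these are
the `coordLift` of the names. -/
theorem coordLift_apply_eq_ite [DecidableEq ι] {S : Submonoid A} [IsLocalization S R]
    (hS : S ≤ nonZeroDivisors A) {f : P →ₗ[A] M} {e : Basis ι R M} {p : ι → P}
    (hp : ∀ i, e i = f (p i)) {u : A} {φ : ι → P →ₗ[A] A}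
    (hφ : ∀ i x, algebraMap A R (φ i x) = u • e.repr (f x) i) (i j : ι) :
    φ i (p j) = if i = j then u else 0 := by
  apply IsLocalization.injective R hS
  rw [hφ, ← hp, Basis.repr_self, Finsupp.single_apply]
  split_ifs <;> simp_all [Algebra.smul_def]

theorem smul_eq_sum_coordLift [Fintype ι] [IsScalarTower A R M] {S : Submonoid A}
    [IsLocalization S R] (hS : S ≤ nonZeroDivisors A) {f : P →ₗ[A] M} [IsLocalizedModule S f]
    {e : Basis ι R M} {p : ι → P} (hp : ∀ i, e i = f (p i)) {u : A} {φ : ι → P →ₗ[A] A}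
    (hφ : ∀ i x, algebraMap A R (φ i x) = u • e.repr (f x) i) (ψ : P →ₗ[A] A) :
    u • ψ = ∑ i, ψ (p i) • φ i := by
  ext x
  apply IsLocalization.injective R hS
  let Ψ := mapExtendScalars S f (Algebra.linearMap A R) R ψ
  have hΨ (y : P) : Ψ (f y) = algebraMap A R (ψ y) :=
    map_apply S f (Algebra.linearMap A R) ψ y
  calc algebraMap A R ((u • ψ) x) = u • Ψ (f x) := by
        rw [hΨ, LinearMap.smul_apply, smul_eq_mul, map_mul, Algebra.smul_def]
    _ = ∑ i, (u • e.repr (f x) i) * Ψ (e i) := by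
        conv_lhs => rw [← e.sum_repr (f x)]
        simp only [map_sum, map_smul, Finset.smul_sum, smul_eq_mul, smul_mul_assoc]
    _ = algebraMap A R ((∑ i, ψ (p i) • φ i) x) := by
        simp only [← hφ, hp, hΨ, LinearMap.sum_apply, LinearMap.smul_apply, smul_eq_mul, map_sum,
          map_mul, mul_comm]

theorem comp_smul_id_eq_comp_sum_coordLift [Fintype ι] [IsScalarTower A R M]
    {f : P →ₗ[A] M} {e : Basis ι R M} {p : ι → P} (hp : ∀ i, e i = f (p i)) {u : A}
    {φ : ι → P →ₗ[A] A} (hφ : ∀ i x, algebraMap A R (φ i x) = u • e.repr (f x) i) :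
    f ∘ₗ (u • LinearMap.id) = f ∘ₗ ∑ i, (φ i).smulRight (p i) := by
  ext x
  simp only [LinearMap.comp_apply, LinearMap.smul_apply, LinearMap.id_apply, map_smul,
    LinearMap.sum_apply, LinearMap.smulRight_apply, map_sum]
  conv_lhs => rw [← e.sum_repr (f x), Finset.smul_sum]
  refine Finset.sum_congr rfl fun i _ => ?_
  rw [← hp, ← algebraMap_smul R (φ i x), hφ, smul_assoc]

theorem exists_dual_families_of_basis [Fintype ι] [DecidableEq ι] [IsScalarTower A R M]
    (S : Submonoid A) [IsLocalization S R] (hS : S ≤ nonZeroDivisors A) [Module.Finite A P]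
    (f : P →ₗ[A] M) [IsLocalizedModule S f] (b : Basis ι R M) :
    ∃ (p : ι → P) (φ : ι → P →ₗ[A] A), ∃ u ∈ S,
      (∀ x : P, u • x ∈ Submodule.span A (Set.range p)) ∧
      (∀ ψ : P →ₗ[A] A, u • ψ ∈ Submodule.span A (Set.range φ)) ∧
      (∀ i j, φ i (p j) = if i = j then u else 0) := by
  obtain ⟨e, p, hp⟩ := exists_basis_apply_eq S f b
  obtain ⟨u, hu, φ, hφ⟩ := IsLocalization.exists_algebraMap_apply_eq_smul S hS
    fun i => (e.coord i).restrictScalars A ∘ₗ f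
  obtain ⟨v, hv⟩ := Module.Finite.exists_smul_of_comp_eq_of_isLocalizedModule S f _ _
    (comp_smul_id_eq_comp_sum_coordLift hp hφ)
  refine ⟨p, fun i => (v : A) • φ i, v * u, mul_mem v.2 hu, fun x => ?_, fun ψ => ?_,
    fun i j => ?_⟩
  · have hx := LinearMap.congr_fun hv x
    simp only [LinearMap.smul_apply, LinearMap.id_apply, LinearMap.sum_apply,
      LinearMap.smulRight_apply, Submonoid.smul_def] at hx
    rw [mul_smul, hx, Finset.smul_sum]
    simpa only [smul_smul] using (Submodule.mem_span_range_iff_exists_fun A).mpr ⟨_, rfl⟩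
  · rw [mul_smul, smul_eq_sum_coordLift hS hp hφ ψ, Finset.smul_sum]
    simpa only [smul_comm (v : A)] using (Submodule.mem_span_range_iff_exists_fun A).mpr ⟨_, rfl⟩
  · rw [LinearMap.smul_apply, coordLift_apply_eq_ite hS hp hφ, smul_ite, smul_zero, smul_eq_mul]

end IsLocalizedModule

end

theorem statement_17_general (A : Type*) [CommRing A]
    (P : Type*) [AddCommGroup P] [Module A P] [Module.Finite A P]
    (s : A) (hs : s ∈ nonZeroDivisors A) (r : ℕ)
    (hfree : Module.Free (Localization.Away s) (LocalizedModule (Submonoid.powers s) P))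
    (hrank : Module.finrank (Localization.Away s) (LocalizedModule (Submonoid.powers s) P) = r) :
    ∃ (p : Fin r → P) (φ : Fin r → (P →ₗ[A] A)) (t : ℕ),
      (∀ x : P, (s ^ t : A) • x ∈ Submodule.span A (Set.range p)) ∧
      (∀ ψ : P →ₗ[A] A, (s ^ t : A) • ψ ∈ Submodule.span A (Set.range φ)) ∧
      (∀ i j : Fin r, φ i (p j) = if i = j then s ^ t else 0) := by
  rcases subsingleton_or_nontrivial A with _ | _
  · have := Module.subsingleton A P
    exact ⟨0, 0, 0, fun x => Subsingleton.elim 0 (s ^ 0 • x) ▸ zero_mem _,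
      fun ψ => Subsingleton.elim 0 (s ^ 0 • ψ) ▸ zero_mem _, fun _ _ => Subsingleton.elim _ _⟩
  have hS : Submonoid.powers s ≤ nonZeroDivisors A := Submonoid.powers_le.mpr hs
  have := (IsLocalization.injective (Localization.Away s) hS).nontrivial
  obtain ⟨p, φ, _, ⟨t, rfl⟩, hP, hdual, hdiag⟩ :=
    IsLocalizedModule.exists_dual_families_of_basis (Submonoid.powers s) hS
      (LocalizedModule.mkLinearMap _ P) (finBasisOfFinrankEq _ _ hrank)
  exact ⟨p, φ, t, hP, hdual, hdiag⟩

/-- Let `A` be a reduced commutative ring and `P` a finitely generated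
`A`-module. Assume `s ∈ A` is a non-zerodivisor such that the localization `P_s` is a free
`A_s`-module of rank `r ≥ 1`. Then there exist `p₁,…,p_r ∈ P`, linear maps
`φ₁,…,φ_r : P → A` and `t ∈ ℕ` such that `sᵗ·P ⊆ A p₁ + ⋯ + A p_r`,
`sᵗ·Hom_A(P,A) ⊆ A φ₁ + ⋯ + A φ_r`, and `φᵢ(pⱼ) = sᵗ` if `i = j` and `0` otherwise. -/
theorem statement_17 (A : Type*) [CommRing A] [IsReduced A]
    (P : Type*) [AddCommGroup P] [Module A P] [Module.Finite A P]
    (s : A) (hs : s ∈ nonZeroDivisors A) (r : ℕ) (hr : 1 ≤ r)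
    (hfree : Module.Free (Localization.Away s) (LocalizedModule (Submonoid.powers s) P))
    (hrank : Module.finrank (Localization.Away s) (LocalizedModule (Submonoid.powers s) P) = r) :
    ∃ (p : Fin r → P) (φ : Fin r → (P →ₗ[A] A)) (t : ℕ),
      (∀ x : P, (s ^ t : A) • x ∈ Submodule.span A (Set.range p)) ∧
      (∀ ψ : P →ₗ[A] A, (s ^ t : A) • ψ ∈ Submodule.span A (Set.range φ)) ∧
      (∀ i j : Fin r, φ i (p j) = if i = j then s ^ t else 0) :=
  statement_17_general A P s hs r hfree hrank
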